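/- Let T_Q = (Q_{i-j})_{i,j≥0} be a positive semidefinite banded Toeplitz operator on ℓ²_H(ℕ₀) with Q_j = 0 for |j| ≥ m+1. Then the Schur complement S(m) of T_Q on {0,…,m} satisfies S(m) = [[Q_0, B*],[B, S(m-1)]] with B = col(Q_1,…,Q_m); that is, the first row of S(m) consists exactly of the Toeplitz coefficients Q_0, Q_1*, …, Q_m*. -/

import Mathlib

/-!
Write `m = n + 1` and `X = [[Q_0, B^*], [B, S(n)]]`. Because `T_Q` has band `m`, its quadratic
form splits as the first row and column plus the form of the shifted `T_Q`, which dominates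
`S(n)`; so `X ≤ T_Q`. For `X ≥ 0` one needs a lower bound on `S(n)`: in the completion of the
finitely supported sequences under `⟨T_Q f, g⟩`, compressing the projection onto the orthogonal
complement of the sequences vanishing on `{0, …, n}` gives an admissible matrix for `S(n)`, and
this matrix bordered by the first row of `T_Q` is positive, as the band makes the first row blind
to the coordinates beyond `m`. Hence `X ≤ S(m)` by maximality. The lower-right block of `S(m)` is
admissible for `S(n)`, so, comparing with `X`, it equals `S(n)`. Finally `S(m) - X` is positive,
vanishes off its first row and column and has corner `S(m)₀₀ - Q_0 ≤ 0`, so its first column is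
zero.
-/

open scoped InnerProductSpace
open ContinuousLinearMap

section

variable {H : Type*} [NormedAddCommGroup H] [InnerProductSpace ℂ H] [CompleteSpace H]

/-- The quadratic form of the block Toeplitz matrix `(Q_{i-j})_{i,j≥0}` on vectors
supported in `{0,…,N-1}`. -/
noncomputable def toepQF (Q : ℤ → H →L[ℂ] H) (N : ℕ) (v : ℕ → H) : ℝ :=
  ∑ i ∈ Finset.range N, ∑ j ∈ Finset.range N, (⟪Q ((i : ℤ) - (j : ℤ)) (v j), v i⟫_ℂ).re

/-- The block Toeplitz matrix `(Q_{i-j})_{i,j≥0}` is (hermitian and) positive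
semidefinite on finitely supported sequences. -/
def ToepPos (Q : ℤ → H →L[ℂ] H) : Prop :=
  (∀ k : ℤ, Q (-k) = (Q k).adjoint) ∧ ∀ N v, 0 ≤ toepQF Q N v

/-- The quadratic form of a block matrix supported on `{0,…,m} × {0,…,m}`. -/
noncomputable def schurQF (m : ℕ) (S : ℕ → ℕ → H →L[ℂ] H) (v : ℕ → H) : ℝ :=
  ∑ i ∈ Finset.range (m + 1), ∑ j ∈ Finset.range (m + 1), (⟪S i j (v j), v i⟫_ℂ).re

/-- `S` is the Schur complement `S(m)` of the positive Toeplitz operator `T_Q` supported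
on rows and columns `{0,…,m}`: the maximal positive operator matrix supported there
with `T_Q - S ≥ 0`. -/
def IsSchurToep (Q : ℤ → H →L[ℂ] H) (m : ℕ) (S : ℕ → ℕ → H →L[ℂ] H) : Prop :=
  (∀ i j, m < i ∨ m < j → S i j = 0) ∧ (∀ i j, (S i j).adjoint = S j i) ∧
    (∀ v, 0 ≤ schurQF m S v) ∧
    (∀ N (v : ℕ → H), (∀ k, N ≤ k → v k = 0) → schurQF m S v ≤ toepQF Q N v) ∧
    ∀ X : ℕ → ℕ → H →L[ℂ] H, (∀ i j, m < i ∨ m < j → X i j = 0) →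
      (∀ i j, (X i j).adjoint = X j i) → (∀ v, 0 ≤ schurQF m X v) →
      (∀ N (v : ℕ → H), (∀ k, N ≤ k → v k = 0) → schurQF m X v ≤ toepQF Q N v) →
      ∀ v, schurQF m X v ≤ schurQF m S v

end

namespace ToeplitzSchur

noncomputable section

open Finset

def seqCons {α : Type*} (x : α) (w : ℕ → α) : ℕ → α
  | 0 => x
  | k + 1 => w k

@[simp] lemma seqCons_zero {α : Type*} (x : α) (w : ℕ → α) : seqCons x w 0 = x := rfl

@[simp] lemma seqCons_succ {α : Type*} (x : α) (w : ℕ → α) (k : ℕ) :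
    seqCons x w (k + 1) = w k := rfl

lemma pi_single_eq_zero_of_lt {M : Type*} [Zero M] {j k : ℕ} (h : j < k) (x : M) :
    (Pi.single j x : ℕ → M) k = 0 :=
  Pi.single_eq_of_ne (M := fun _ => M) h.ne' x

variable {H : Type*} [NormedAddCommGroup H] [InnerProductSpace ℂ H]

section BlockForms

lemma double_sum_range_succ' (M : ℕ) (a : ℕ → ℕ → ℝ) :
    ∑ i ∈ range (M + 1), ∑ j ∈ range (M + 1), a i j =
      a 0 0 + ∑ i ∈ range M, (a (i + 1) 0 + a 0 (i + 1)) +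
        ∑ i ∈ range M, ∑ j ∈ range M, a (i + 1) (j + 1) := by
  simp only [sum_range_succ' _ M, sum_add_distrib]
  ring

lemma schurQF_succ (M : ℕ) (A : ℕ → ℕ → H →L[ℂ] H) (v : ℕ → H) :
    schurQF (M + 1) A v = (⟪A 0 0 (v 0), v 0⟫_ℂ).re +
      ∑ i ∈ range (M + 1),
        ((⟪A (i + 1) 0 (v 0), v (i + 1)⟫_ℂ).re + (⟪A 0 (i + 1) (v (i + 1)), v 0⟫_ℂ).re) +
      schurQF M (fun i j => A (i + 1) (j + 1)) (fun k => v (k + 1)) :=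
  double_sum_range_succ' _ _

lemma schurQF_sub (M : ℕ) (A B : ℕ → ℕ → H →L[ℂ] H) (v : ℕ → H) :
    schurQF M (fun i j => A i j - B i j) v = schurQF M A v - schurQF M B v := by
  simp only [schurQF, ← sum_sub_distrib, sub_apply, inner_sub_left, Complex.sub_re]

lemma sum_inner_single_single (M : ℕ) (A : ℕ → ℕ → H →L[ℂ] H) {p q : ℕ} (hp : p ≤ M)
    (hq : q ≤ M) (x y : H) :
    ∑ i ∈ range (M + 1), ∑ j ∈ range (M + 1),
      ⟪A i j ((Pi.single q y : ℕ → H) j), (Pi.single p x : ℕ → H) i⟫_ℂ = ⟪A p q y, x⟫_ℂ := by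
  rw [sum_eq_single_of_mem p (mem_range.2 (by omega)) fun i _ hi => by simp [hi],
    sum_eq_single_of_mem q (mem_range.2 (by omega)) fun j _ hj => by simp [hj]]
  simp

lemma schurQF_eq_re_sum (M : ℕ) (A : ℕ → ℕ → H →L[ℂ] H) (v : ℕ → H) :
    schurQF M A v = (∑ i ∈ range (M + 1), ∑ j ∈ range (M + 1), ⟪A i j (v j), v i⟫_ℂ).re := by
  simp only [schurQF, Complex.re_sum]

lemma schurQF_single (M : ℕ) (A : ℕ → ℕ → H →L[ℂ] H) {p : ℕ} (hp : p ≤ M) (x : H) :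
    schurQF M A (Pi.single p x) = (⟪A p p x, x⟫_ℂ).re := by
  rw [schurQF_eq_re_sum, sum_inner_single_single M A hp hp]

lemma schurQF_single_add_single (M : ℕ) (A : ℕ → ℕ → H →L[ℂ] H) {p q : ℕ} (hp : p ≤ M)
    (hq : q ≤ M) (x y : H) :
    schurQF M A (Pi.single p x + Pi.single q y) =
      (⟪A p p x, x⟫_ℂ).re + (⟪A p q y, x⟫_ℂ).re + (⟪A q p x, y⟫_ℂ).re +
        (⟪A q q y, y⟫_ℂ).re := by
  simp only [schurQF_eq_re_sum, Pi.add_apply, map_add, inner_add_left, inner_add_right,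
    sum_add_distrib, sum_inner_single_single M A hp hq, sum_inner_single_single M A hp hp,
    sum_inner_single_single M A hq hp, sum_inner_single_single M A hq hq, Complex.add_re]
  ring

lemma schurQF_shift (n : ℕ) (X : ℕ → ℕ → H →L[ℂ] H) (w : ℕ → H) :
    schurQF n (fun i j => X (i + 1) (j + 1)) w = schurQF (n + 1) X (seqCons 0 w) := by
  simp [schurQF_succ]

variable [CompleteSpace H]

lemma entry_eq_zero_of_re_inner_diag_eq_zero {M : ℕ} {A : ℕ → ℕ → H →L[ℂ] H}
    (hA : ∀ i j, (A i j).adjoint = A j i) (hpos : ∀ v, 0 ≤ schurQF M A v) {p q : ℕ}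
    (hp : p ≤ M) (hq : q ≤ M) (hdiag : ∀ x, (⟪A p p x, x⟫_ℂ).re = 0) : A p q = 0 := by
  ext y
  set z := A p q y with hz
  have hzz : (⟪z, z⟫_ℂ).re = ‖z‖ ^ 2 := by simp [← Complex.ofReal_pow]
  rcases eq_or_ne p q with rfl | hpq
  · have hsym : ⟪A p p z, y⟫_ℂ = ⟪z, z⟫_ℂ := by rw [← adjoint_inner_right, hA]
    have h := hdiag (y + z)
    simp only [map_add, inner_add_left, inner_add_right, hsym, Complex.add_re, hdiag, hzz] at h
    simpa using (by linarith : ‖z‖ ^ 2 = 0)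
  · -- along the line `t ↦ t z ⊕ y` the quadratic form is affine with slope `2 ‖z‖²`
    have hline : ∀ t : ℝ, 0 ≤ 0 * (t * t) + 2 * ‖z‖ ^ 2 * t + (⟪A q q y, y⟫_ℂ).re := by
      intro t
      have h := hpos (Pi.single p ((t : ℂ) • z) + Pi.single q y)
      have hsym : ⟪A q p ((t : ℂ) • z), y⟫_ℂ = t * ⟪z, z⟫_ℂ := by
        rw [← adjoint_inner_right, hA, inner_smul_left, ← hz, Complex.conj_ofReal]
      rw [schurQF_single_add_single M A hp hq, hdiag, hsym, inner_smul_right, ← hz] at h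
      simp only [Complex.re_ofReal_mul, hzz] at h
      linarith
    have h2 : (2 * ‖z‖ ^ 2) ^ 2 = 0 :=
      le_antisymm (by simpa [discrim] using discrim_le_zero hline) (sq_nonneg _)
    simpa using h2

lemma eq_of_schurQF_eq {M : ℕ} {A B : ℕ → ℕ → H →L[ℂ] H}
    (hAs : ∀ i j, M < i ∨ M < j → A i j = 0) (hBs : ∀ i j, M < i ∨ M < j → B i j = 0)
    (hA : ∀ i j, (A i j).adjoint = A j i) (hB : ∀ i j, (B i j).adjoint = B j i)
    (h : ∀ v, schurQF M A v = schurQF M B v) : A = B := by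
  set E : ℕ → ℕ → H →L[ℂ] H := fun i j => A i j - B i j
  have hE0 : ∀ v, schurQF M E v = 0 := fun v => by rw [schurQF_sub, h, sub_self]
  have hE : ∀ i j, (E i j).adjoint = E j i := fun i j => by simp only [E, map_sub, hA, hB]
  funext i j
  by_cases hij : i ≤ M ∧ j ≤ M
  · refine sub_eq_zero.1 (entry_eq_zero_of_re_inner_diag_eq_zero hE (fun v => (hE0 v).ge)
      hij.1 hij.2 fun x => ?_)
    simpa [schurQF_single M E hij.1] using hE0 (Pi.single i x)
  · rw [hAs i j (by omega), hBs i j (by omega)]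

end BlockForms

section ToeplitzForm

/-- The off-diagonal part of the first row and column of `T_Q` paired with `(x, w)`. -/
def toepCross (Q : ℤ → H →L[ℂ] H) (N : ℕ) (x : H) (w : ℕ → H) : ℝ :=
  ∑ i ∈ range N,
    ((⟪Q ((i + 1 : ℕ) : ℤ) x, w i⟫_ℂ).re + (⟪Q (-((i + 1 : ℕ) : ℤ)) (w i), x⟫_ℂ).re)

lemma toepQF_succ (Q : ℤ → H →L[ℂ] H) (N : ℕ) (v : ℕ → H) :
    toepQF Q (N + 1) v = (⟪Q 0 (v 0), v 0⟫_ℂ).re + toepCross Q N (v 0) (fun k => v (k + 1)) +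
      toepQF Q N (fun k => v (k + 1)) := by
  rw [toepQF, double_sum_range_succ', toepCross, toepQF]
  simp only [Nat.cast_zero, sub_zero, zero_sub, Nat.cast_add, Nat.cast_one,
    add_sub_add_right_eq_sub]

lemma toepQF_succ_eq_schurQF (Q : ℤ → H →L[ℂ] H) (M : ℕ) (v : ℕ → H) :
    toepQF Q (M + 1) v = schurQF M (fun i j => Q ((i : ℤ) - (j : ℤ))) v := rfl

lemma toepQF_single (Q : ℤ → H →L[ℂ] H) (j : ℕ) (x : H) :
    toepQF Q (j + 1) (Pi.single j x) = (⟪Q 0 x, x⟫_ℂ).re := by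
  rw [toepQF_succ_eq_schurQF, schurQF_single _ _ le_rfl, sub_self]

lemma toep_eq_zero_of_band {Q : ℤ → H →L[ℂ] H} {m : ℕ}
    (hband : ∀ k : ℤ, (m : ℤ) < |k| → Q k = 0) {k : ℕ} (hk : m < k) :
    Q k = 0 ∧ Q (-k) = 0 :=
  ⟨hband _ (by rw [Nat.abs_cast]; exact_mod_cast hk),
    hband _ (by rw [abs_neg, Nat.abs_cast]; exact_mod_cast hk)⟩

lemma toepCross_eq_of_band {Q : ℤ → H →L[ℂ] H} {m N : ℕ}
    (hband : ∀ k : ℤ, (m : ℤ) < |k| → Q k = 0) (hN : m ≤ N) (x : H) (w : ℕ → H) :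
    toepCross Q N x w = toepCross Q m x w := by
  refine (sum_subset (range_subset_range.2 hN) fun i _ hi => ?_).symm
  obtain ⟨h₁, h₂⟩ := toep_eq_zero_of_band hband (k := i + 1) (by simp at hi; omega)
  rw [h₁, h₂]
  simp

lemma toepCross_eq_of_support (Q : ℤ → H →L[ℂ] H) {N M : ℕ} (hN : N ≤ M) (x : H) {w : ℕ → H}
    (hw : ∀ i, N ≤ i → w i = 0) : toepCross Q M x w = toepCross Q N x w := by
  refine (sum_subset (range_subset_range.2 hN) fun i _ hi => ?_).symm
  simp [hw i (by simpa using hi)]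

lemma toepCross_congr (Q : ℤ → H →L[ℂ] H) {N : ℕ} (x : H) {w w' : ℕ → H}
    (hw : ∀ i, i < N → w i = w' i) : toepCross Q N x w = toepCross Q N x w' :=
  sum_congr rfl fun i hi => by rw [hw i (mem_range.1 hi)]

lemma toepQF_seqCons_zero (Q : ℤ → H →L[ℂ] H) (N : ℕ) (w : ℕ → H) :
    toepQF Q (N + 1) (seqCons 0 w) = toepQF Q N w := by
  simp [toepQF_succ, toepCross]

/-- The block matrix `[[Q_0, B^*], [B, S']]` with `B = col(Q_1, Q_2, …)`. -/
def toepBorder (Q : ℤ → H →L[ℂ] H) (S' : ℕ → ℕ → H →L[ℂ] H) : ℕ → ℕ → H →L[ℂ] H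
  | i, 0 => Q i
  | 0, j + 1 => Q (-((j + 1 : ℕ) : ℤ))
  | i + 1, j + 1 => S' i j

lemma schurQF_toepBorder (Q : ℤ → H →L[ℂ] H) (n : ℕ) (S' : ℕ → ℕ → H →L[ℂ] H) (v : ℕ → H) :
    schurQF (n + 1) (toepBorder Q S') v = (⟪Q 0 (v 0), v 0⟫_ℂ).re +
      toepCross Q (n + 1) (v 0) (fun k => v (k + 1)) + schurQF n S' (fun k => v (k + 1)) :=
  schurQF_succ _ _ _

end ToeplitzForm

section ToeplitzSpace

def c00 (H : Type*) [AddCommGroup H] [Module ℂ H] : Submodule ℂ (ℕ → H) where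
  carrier := {f | ∃ N, ∀ k, N ≤ k → f k = 0}
  add_mem' := by
    rintro f g ⟨N, hf⟩ ⟨M, hg⟩
    exact ⟨max N M, fun k hk => by
      simp [hf k (le_of_max_le_left hk), hg k (le_of_max_le_right hk)]⟩
  zero_mem' := ⟨0, fun _ _ => rfl⟩
  smul_mem' := by
    rintro c f ⟨N, hf⟩
    exact ⟨N, fun k hk => by simp [hf k hk]⟩

lemma pi_single_mem_c00 (j : ℕ) (x : H) : Pi.single j x ∈ c00 H :=
  ⟨j + 1, fun _ hk => pi_single_eq_zero_of_lt hk x⟩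

def c00.single (j : ℕ) : H →ₗ[ℂ] c00 H where
  toFun x := ⟨Pi.single j x, pi_single_mem_c00 j x⟩
  map_add' x y := by ext; simp [Pi.single_add]
  map_smul' c x := by ext; simp [Pi.single_smul]

@[simp] lemma c00.coe_single (j : ℕ) (x : H) : (c00.single j x : ℕ → H) = Pi.single j x := rfl

def c00.trunc (n : ℕ) (w : ℕ → H) : c00 H := ∑ j ∈ range (n + 1), c00.single j (w j)

lemma c00.trunc_apply (n : ℕ) (w : ℕ → H) (i : ℕ) :
    (c00.trunc n w : ℕ → H) i = if i ≤ n then w i else 0 := by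
  simp [c00.trunc, Finset.sum_apply, Pi.single_apply]

def c00.vanishingUpTo (n : ℕ) : Submodule ℂ (c00 H) where
  carrier := {f | ∀ i ≤ n, (f : ℕ → H) i = 0}
  add_mem' hf hg i hi := by simp [hf i hi, hg i hi]
  zero_mem' _ _ := rfl
  smul_mem' c f hf i hi := by simp [hf i hi]

def toepSum (Q : ℤ → H →L[ℂ] H) (N : ℕ) (f g : ℕ → H) : ℂ :=
  ∑ i ∈ range N, ∑ j ∈ range N, ⟪Q ((i : ℤ) - (j : ℤ)) (f j), g i⟫_ℂ

lemma re_toepSum_self (Q : ℤ → H →L[ℂ] H) (N : ℕ) (v : ℕ → H) :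
    (toepSum Q N v v).re = toepQF Q N v := by
  simp only [toepSum, toepQF, Complex.re_sum]

lemma toepSum_add_left (Q : ℤ → H →L[ℂ] H) (N : ℕ) (f f' g : ℕ → H) :
    toepSum Q N (f + f') g = toepSum Q N f g + toepSum Q N f' g := by
  simp only [toepSum, Pi.add_apply, map_add, inner_add_left, sum_add_distrib]

lemma toepSum_smul_left (Q : ℤ → H →L[ℂ] H) (N : ℕ) (c : ℂ) (f g : ℕ → H) :
    toepSum Q N (c • f) g = (starRingEnd ℂ) c * toepSum Q N f g := by
  simp only [toepSum, Pi.smul_apply, map_smul, inner_smul_left, mul_sum]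

def toepForm (Q : ℤ → H →L[ℂ] H) (f g : ℕ → H) : ℂ :=
  ∑' i : ℕ, ∑' j : ℕ, ⟪Q ((i : ℤ) - (j : ℤ)) (f j), g i⟫_ℂ

lemma toepForm_eq_toepSum (Q : ℤ → H →L[ℂ] H) {N : ℕ} {f g : ℕ → H}
    (hf : ∀ k, N ≤ k → f k = 0) (hg : ∀ k, N ≤ k → g k = 0) :
    toepForm Q f g = toepSum Q N f g := by
  refine (tsum_eq_sum fun i hi => ?_).trans (sum_congr rfl fun i _ => tsum_eq_sum fun j hj => ?_)
  · simp [hg i (by simpa using hi)]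
  · simp [hf j (by simpa using hj)]

lemma toepForm_add_left (Q : ℤ → H →L[ℂ] H) (f f' g : c00 H) :
    toepForm Q (f + f' : c00 H) g = toepForm Q f g + toepForm Q f' g := by
  obtain ⟨N₁, h₁⟩ := f.2
  obtain ⟨N₂, h₂⟩ := f'.2
  obtain ⟨N₃, h₃⟩ := g.2
  set N := max N₁ (max N₂ N₃)
  have h₁' : ∀ k, N ≤ k → (f : ℕ → H) k = 0 := fun k hk => h₁ k (by omega)
  have h₂' : ∀ k, N ≤ k → (f' : ℕ → H) k = 0 := fun k hk => h₂ k (by omega)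
  have h₃' : ∀ k, N ≤ k → (g : ℕ → H) k = 0 := fun k hk => h₃ k (by omega)
  rw [toepForm_eq_toepSum Q (f := (f + f' : c00 H)) (fun k hk => by simp [h₁' k hk, h₂' k hk]) h₃',
    toepForm_eq_toepSum Q h₁' h₃', toepForm_eq_toepSum Q h₂' h₃', Submodule.coe_add,
    toepSum_add_left]

lemma toepForm_smul_left (Q : ℤ → H →L[ℂ] H) (c : ℂ) (f g : c00 H) :
    toepForm Q (c • f : c00 H) g = (starRingEnd ℂ) c * toepForm Q f g := by
  obtain ⟨N₁, h₁⟩ := f.2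
  obtain ⟨N₂, h₂⟩ := g.2
  have h₁' : ∀ k, max N₁ N₂ ≤ k → (f : ℕ → H) k = 0 := fun k hk => h₁ k (by omega)
  have h₂' : ∀ k, max N₁ N₂ ≤ k → (g : ℕ → H) k = 0 := fun k hk => h₂ k (by omega)
  rw [toepForm_eq_toepSum Q (f := (c • f : c00 H)) (fun k hk => by simp [h₁' k hk]) h₂',
    toepForm_eq_toepSum Q h₁' h₂', Submodule.coe_smul, toepSum_smul_left]

variable [CompleteSpace H]

lemma conj_toepSum {Q : ℤ → H →L[ℂ] H} (hQ : ∀ k, Q (-k) = (Q k).adjoint) (N : ℕ)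
    (f g : ℕ → H) : (starRingEnd ℂ) (toepSum Q N g f) = toepSum Q N f g := by
  simp only [toepSum, map_sum, inner_conj_symm]
  rw [sum_comm]
  refine sum_congr rfl fun i _ => sum_congr rfl fun j _ => ?_
  rw [← neg_sub, hQ, adjoint_inner_right]

lemma toepForm_conj {Q : ℤ → H →L[ℂ] H} (hQ : ∀ k, Q (-k) = (Q k).adjoint) (f g : c00 H) :
    (starRingEnd ℂ) (toepForm Q g f) = toepForm Q f g := by
  obtain ⟨N, hf⟩ := f.2
  obtain ⟨M, hg⟩ := g.2
  rw [toepForm_eq_toepSum Q (N := max N M) (fun k hk => hg k (le_of_max_le_right hk))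
      (fun k hk => hf k (le_of_max_le_left hk)),
    toepForm_eq_toepSum Q (N := max N M) (fun k hk => hf k (le_of_max_le_left hk))
      (fun k hk => hg k (le_of_max_le_right hk)), conj_toepSum hQ]

/-- The space of finitely supported sequences with the semi-inner product `⟨T_Q f, g⟩`. -/
def ToepSpace (Q : ℤ → H →L[ℂ] H) (_ : ToepPos Q) : Type _ := c00 H

variable {Q : ℤ → H →L[ℂ] H} (hQ : ToepPos Q)

instance : AddCommGroup (ToepSpace Q hQ) := inferInstanceAs (AddCommGroup (c00 H))

instance : Module ℂ (ToepSpace Q hQ) := inferInstanceAs (Module ℂ (c00 H))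

def ToepSpace.equiv : c00 H ≃ₗ[ℂ] ToepSpace Q hQ := LinearEquiv.refl ℂ (c00 H)

instance ToepSpace.core : PreInnerProductSpace.Core ℂ (ToepSpace Q hQ) where
  inner f g := toepForm Q ((ToepSpace.equiv hQ).symm f) ((ToepSpace.equiv hQ).symm g)
  conj_inner_symm f g := toepForm_conj hQ.1 _ _
  re_inner_nonneg f := by
    obtain ⟨N, hf⟩ := ((ToepSpace.equiv hQ).symm f).2
    rw [toepForm_eq_toepSum Q hf hf]
    exact (hQ.2 N _).trans_eq (re_toepSum_self Q N _).symm
  add_left f f' g := by simp only [map_add, toepForm_add_left]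
  smul_left f g c := by simp only [map_smul, toepForm_smul_left]

instance : SeminormedAddCommGroup (ToepSpace Q hQ) :=
  InnerProductSpace.Core.toSeminormedAddCommGroup (𝕜 := ℂ)

instance : InnerProductSpace ℂ (ToepSpace Q hQ) := InnerProductSpace.ofCore (ToepSpace.core hQ)

abbrev ToepHilbert := UniformSpace.Completion (ToepSpace Q hQ)

def embed : c00 H →ₗ[ℂ] ToepHilbert hQ :=
  (UniformSpace.Completion.toComplL (𝕜 := ℂ) (E := ToepSpace Q hQ)).toLinearMap ∘ₗ
    (ToepSpace.equiv hQ).toLinearMap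

lemma inner_embed (f g : c00 H) : ⟪embed hQ f, embed hQ g⟫_ℂ = toepForm Q f g :=
  UniformSpace.Completion.inner_coe (E := ToepSpace Q hQ) _ _

lemma norm_embed_sq {N : ℕ} {f : c00 H} (hf : ∀ k, N ≤ k → (f : ℕ → H) k = 0) :
    ‖embed hQ f‖ ^ 2 = toepQF Q N f := by
  rw [← re_toepSum_self, ← toepForm_eq_toepSum Q hf hf, ← inner_embed hQ,
    inner_self_eq_norm_sq_to_K]
  simp [← Complex.ofReal_pow]

end ToeplitzSpace

variable [CompleteSpace H]

/-- The admissible matrices in the maximality clause of `IsSchurToep`. -/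
structure IsToepMinorant (Q : ℤ → H →L[ℂ] H) (m : ℕ) (X : ℕ → ℕ → H →L[ℂ] H) : Prop where
  support : ∀ i j, m < i ∨ m < j → X i j = 0
  adjoint_eq : ∀ i j, (X i j).adjoint = X j i
  nonneg : ∀ v, 0 ≤ schurQF m X v
  le_toepQF : ∀ N (v : ℕ → H), (∀ k, N ≤ k → v k = 0) → schurQF m X v ≤ toepQF Q N v

lemma _root_.IsSchurToep.isToepMinorant {Q : ℤ → H →L[ℂ] H} {m : ℕ} {S : ℕ → ℕ → H →L[ℂ] H}
    (hS : IsSchurToep Q m S) : IsToepMinorant Q m S :=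
  ⟨hS.1, hS.2.1, hS.2.2.1, hS.2.2.2.1⟩

lemma _root_.IsSchurToep.schurQF_le {Q : ℤ → H →L[ℂ] H} {m : ℕ} {S X : ℕ → ℕ → H →L[ℂ] H}
    (hS : IsSchurToep Q m S) (hX : IsToepMinorant Q m X) (v : ℕ → H) :
    schurQF m X v ≤ schurQF m S v :=
  hS.2.2.2.2 X hX.1 hX.2 hX.3 hX.4 v

section SchurOperator

variable {Q : ℤ → H →L[ℂ] H} (hQ : ToepPos Q)

def embedSingle (j : ℕ) : H →L[ℂ] ToepHilbert hQ :=
  LinearMap.mkContinuous (embed hQ ∘ₗ c00.single j) √‖Q 0‖ fun x => by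
    have hsq : ‖embed hQ (c00.single j x)‖ ^ 2 ≤ (√‖Q 0‖ * ‖x‖) ^ 2 := by
      rw [norm_embed_sq hQ (N := j + 1) fun k hk => pi_single_eq_zero_of_lt hk x,
        c00.coe_single, toepQF_single, mul_pow, Real.sq_sqrt (norm_nonneg _), sq]
      calc (⟪Q 0 x, x⟫_ℂ).re ≤ ‖Q 0 x‖ * ‖x‖ := re_inner_le_norm (𝕜 := ℂ) _ _
        _ ≤ ‖Q 0‖ * ‖x‖ * ‖x‖ := by gcongr; exact (Q 0).le_opNorm x
        _ = ‖Q 0‖ * (‖x‖ * ‖x‖) := mul_assoc _ _ _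
    exact (pow_le_pow_iff_left₀ (norm_nonneg _) (by positivity) two_ne_zero).1 hsq

lemma embedSingle_apply (j : ℕ) (x : H) : embedSingle hQ j x = embed hQ (c00.single j x) := rfl

def tailRange (n : ℕ) : Submodule ℂ (ToepHilbert hQ) := (c00.vanishingUpTo n).map (embed hQ)

def headProj (n : ℕ) : ToepHilbert hQ →L[ℂ] ToepHilbert hQ := (tailRange hQ n)ᗮ.starProjection

lemma headProj_embed_of_mem {n : ℕ} {g : c00 H} (hg : g ∈ c00.vanishingUpTo n) :
    headProj hQ n (embed hQ g) = 0 :=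
  Submodule.starProjection_orthogonal_apply_eq_zero (Submodule.mem_map_of_mem hg)

lemma sub_headProj_mem_closure (n : ℕ) (z : ToepHilbert hQ) :
    z - headProj hQ n z ∈ closure (tailRange hQ n : Set (ToepHilbert hQ)) := by
  rw [← Submodule.topologicalClosure_coe, ← Submodule.orthogonal_orthogonal_eq_closure]
  exact Submodule.sub_starProjection_mem_orthogonal z

def schurCol (n j : ℕ) : H →L[ℂ] ToepHilbert hQ := headProj hQ n ∘L embedSingle hQ j

/-- The classical Gram-matrix formula for the Schur complement `S(n)`. -/
def schurOp (n i j : ℕ) : H →L[ℂ] H :=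
  if i ≤ n ∧ j ≤ n then (schurCol hQ n i).adjoint ∘L schurCol hQ n j else 0

lemma schurOp_adjoint (n i j : ℕ) : (schurOp hQ n i j).adjoint = schurOp hQ n j i := by
  by_cases h : i ≤ n ∧ j ≤ n
  · rw [schurOp, if_pos h, schurOp, if_pos h.symm, adjoint_comp, adjoint_adjoint]
  · rw [schurOp, if_neg h, schurOp, if_neg fun h' => h h'.symm, map_zero]

lemma sum_schurCol (n : ℕ) (w : ℕ → H) :
    ∑ j ∈ range (n + 1), schurCol hQ n j (w j) = headProj hQ n (embed hQ (c00.trunc n w)) := by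
  simp only [c00.trunc, map_sum, schurCol, comp_apply, embedSingle_apply]

lemma schurQF_schurOp (n : ℕ) (w : ℕ → H) :
    schurQF n (schurOp hQ n) w = ‖headProj hQ n (embed hQ (c00.trunc n w))‖ ^ 2 := by
  rw [← sum_schurCol, ← inner_self_eq_norm_sq (𝕜 := ℂ), inner_sum, map_sum, schurQF]
  refine sum_congr rfl fun i hi => ?_
  rw [sum_inner, map_sum]
  refine sum_congr rfl fun j hj => ?_
  rw [schurOp, if_pos ⟨by simpa [Nat.lt_succ_iff] using hi, by simpa [Nat.lt_succ_iff] using hj⟩,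
    comp_apply, adjoint_inner_left]
  rfl

lemma schurQF_schurOp_le_toepQF (n : ℕ) {N : ℕ} {v : ℕ → H} (hv : ∀ k, N ≤ k → v k = 0) :
    schurQF n (schurOp hQ n) v ≤ toepQF Q N v := by
  set f : c00 H := ⟨v, N, hv⟩
  have hmem : f - c00.trunc n v ∈ c00.vanishingUpTo n := fun i hi => by
    simp [f, c00.trunc_apply, hi]
  have hproj : headProj hQ n (embed hQ (c00.trunc n v)) = headProj hQ n (embed hQ f) := by
    rw [eq_comm, ← sub_eq_zero, ← map_sub, ← map_sub]
    exact headProj_embed_of_mem hQ hmem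
  rw [schurQF_schurOp, hproj, ← norm_embed_sq hQ (f := f) hv]
  exact pow_le_pow_left₀ (norm_nonneg _) (Submodule.norm_starProjection_apply_le _ _) 2

lemma isToepMinorant_schurOp (n : ℕ) : IsToepMinorant Q n (schurOp hQ n) where
  support i j h := if_neg (by omega)
  adjoint_eq := schurOp_adjoint hQ n
  nonneg v := by rw [schurQF_schurOp]; positivity
  le_toepQF _ _ hv := schurQF_schurOp_le_toepQF hQ n hv

lemma schurQF_schurOp_add_nonneg {n : ℕ} (hband : ∀ k : ℤ, ((n + 1 : ℕ) : ℤ) < |k| → Q k = 0)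
    (x : H) (w : ℕ → H) :
    0 ≤ (⟪Q 0 x, x⟫_ℂ).re + toepCross Q (n + 1) x w + schurQF n (schurOp hQ n) w := by
  set z := embed hQ (c00.trunc n w)
  set a := (⟪Q 0 x, x⟫_ℂ).re + toepCross Q (n + 1) x w
  -- positivity of `T_Q` at `(x, trunc w - g)`; the band makes the cross term independent of `g`
  have hdense : ∀ g ∈ c00.vanishingUpTo n, 0 ≤ a + ‖z - embed hQ g‖ ^ 2 := by
    intro g hg
    set d := c00.trunc n w - g
    obtain ⟨N, hN⟩ := d.2
    have hd : ∀ k, max N (n + 1) ≤ k → (d : ℕ → H) k = 0 :=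
      fun k hk => hN k (le_of_max_le_left hk)
    have hcross : toepCross Q (max N (n + 1)) x d = toepCross Q (n + 1) x w := by
      rw [toepCross_eq_of_band hband (le_max_right _ _)]
      exact toepCross_congr Q x fun i hi => by
        simp [d, c00.trunc_apply, hg i (by omega), show i ≤ n by omega]
    have h := hQ.2 (max N (n + 1) + 1) (seqCons x d)
    simp only [toepQF_succ, seqCons_zero, seqCons_succ] at h
    rw [hcross, ← norm_embed_sq hQ hd, map_sub] at h
    exact h
  have hclosed : IsClosed {k | 0 ≤ a + ‖z - k‖ ^ 2} := isClosed_le continuous_const (by fun_prop)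
  have hmem := closure_minimal (by rintro _ ⟨g, hg, rfl⟩; exact hdense g hg) hclosed
    (sub_headProj_mem_closure hQ n z)
  rw [schurQF_schurOp]
  simpa using hmem

end SchurOperator

section Bordering

variable {Q : ℤ → H →L[ℂ] H}

lemma _root_.ToepPos.adjoint_eq (hQ : ToepPos Q) (k : ℤ) : (Q k).adjoint = Q (-k) :=
  (hQ.1 k).symm

lemma _root_.ToepPos.adjoint_neg_eq (hQ : ToepPos Q) (k : ℤ) : (Q (-k)).adjoint = Q k := by
  rw [hQ.1, adjoint_adjoint]

lemma isToepMinorant_toepBorder (hQ : ToepPos Q) {n : ℕ}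
    (hband : ∀ k : ℤ, ((n + 1 : ℕ) : ℤ) < |k| → Q k = 0) {S' : ℕ → ℕ → H →L[ℂ] H}
    (hS' : IsSchurToep Q n S') : IsToepMinorant Q (n + 1) (toepBorder Q S') where
  support
    | i, 0, h => (toep_eq_zero_of_band hband (k := i) (by omega)).1
    | 0, j + 1, h => (toep_eq_zero_of_band hband (k := j + 1) (by omega)).2
    | i + 1, j + 1, h => hS'.isToepMinorant.support i j (by omega)
  adjoint_eq
    | 0, 0 => by
      change (Q ((0 : ℕ) : ℤ)).adjoint = Q ((0 : ℕ) : ℤ)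
      simpa using hQ.adjoint_eq 0
    | i + 1, 0 => hQ.adjoint_eq _
    | 0, j + 1 => hQ.adjoint_neg_eq _
    | i + 1, j + 1 => hS'.isToepMinorant.adjoint_eq i j
  nonneg v := by
    have h₁ := schurQF_schurOp_add_nonneg hQ hband (v 0) (fun k => v (k + 1))
    have h₂ := hS'.schurQF_le (isToepMinorant_schurOp hQ n) (fun k => v (k + 1))
    rw [schurQF_toepBorder]
    linarith
  le_toepQF
    | 0, v, hv => by
      obtain rfl : v = 0 := funext fun k => hv k k.zero_le
      simp [schurQF, toepQF]
    | N + 1, v, hv => by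
      have hcross : toepCross Q (n + 1) (v 0) (fun k => v (k + 1)) =
          toepCross Q N (v 0) (fun k => v (k + 1)) := by
        rcases le_total (n + 1) N with h | h
        · exact (toepCross_eq_of_band hband h _ _).symm
        · exact toepCross_eq_of_support Q h _ fun i hi => hv (i + 1) (by omega)
      have h := hS'.isToepMinorant.le_toepQF N _ fun k hk => hv (k + 1) (by omega)
      rw [schurQF_toepBorder, toepQF_succ, hcross]
      linarith

end Bordering

lemma IsToepMinorant.shift {Q : ℤ → H →L[ℂ] H} {n : ℕ} {X : ℕ → ℕ → H →L[ℂ] H}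
    (hX : IsToepMinorant Q (n + 1) X) : IsToepMinorant Q n (fun i j => X (i + 1) (j + 1)) where
  support i j h := hX.support _ _ (by omega)
  adjoint_eq i j := hX.adjoint_eq _ _
  nonneg w := (schurQF_shift n X w).symm ▸ hX.nonneg _
  le_toepQF N w hw := by
    rw [schurQF_shift, ← toepQF_seqCons_zero]
    refine hX.le_toepQF (N + 1) _ fun k hk => ?_
    obtain ⟨k, rfl⟩ : ∃ k', k = k' + 1 := ⟨k - 1, by omega⟩
    exact hw k (by omega)

lemma _root_.IsSchurToep.apply_zero_eq {Q : ℤ → H →L[ℂ] H} {m : ℕ} {S X : ℕ → ℕ → H →L[ℂ] H}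
    (hS : IsSchurToep Q m S) (hX : IsToepMinorant Q m X) (h00 : X 0 0 = Q 0)
    (hlow : ∀ i j, S (i + 1) (j + 1) = X (i + 1) (j + 1)) {i : ℕ} (hi : i ≤ m) :
    S i 0 = X i 0 := by
  set D : ℕ → ℕ → H →L[ℂ] H := fun i j => S i j - X i j
  have hD : ∀ i j, (D i j).adjoint = D j i := fun i j => by
    simp only [D, map_sub, hS.isToepMinorant.adjoint_eq, hX.adjoint_eq]
  have hDpos : ∀ v, 0 ≤ schurQF m D v := fun v => by
    rw [schurQF_sub]
    linarith [hS.schurQF_le hX v]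
  have hdiag : ∀ x, (⟪D i i x, x⟫_ℂ).re = 0 := by
    intro x
    cases i with
    | zero =>
      have h := hS.isToepMinorant.le_toepQF (0 + 1) (Pi.single 0 x) fun k hk =>
        pi_single_eq_zero_of_lt hk x
      rw [schurQF_single m S (Nat.zero_le m), toepQF_single] at h
      refine le_antisymm ?_ ?_
      · simpa [D, h00, inner_sub_left] using h
      · simpa [schurQF_single m D (Nat.zero_le m)] using hDpos (Pi.single 0 x)
    | succ k => simp [D, hlow]
  exact sub_eq_zero.1 (entry_eq_zero_of_re_inner_diag_eq_zero hD hDpos hi (Nat.zero_le m) hdiag)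

end

end ToeplitzSchur

section

variable {H : Type*} [NormedAddCommGroup H] [InnerProductSpace ℂ H] [CompleteSpace H]

open ToeplitzSchur in
/-- For a banded positive Toeplitz operator (`Q_j = 0` for `|j| > m`), the Schur
complement `S(m)` has the form `[[Q_0, B*],[B, S(m-1)]]` with `B = col(Q_1,…,Q_m)`. -/
theorem schur_toeplitz_banded_first_column (Q : ℤ → H →L[ℂ] H) (hQ : ToepPos Q)
    (m : ℕ) (hm : 1 ≤ m) (hband : ∀ k : ℤ, (m : ℤ) < |k| → Q k = 0)
    (S S' : ℕ → ℕ → H →L[ℂ] H)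
    (hS : IsSchurToep Q m S) (hS' : IsSchurToep Q (m - 1) S') :
    (∀ i : ℕ, i ≤ m → S i 0 = Q (i : ℤ)) ∧
      ∀ i j : ℕ, S (i + 1) (j + 1) = S' i j := by
  obtain ⟨n, rfl⟩ : ∃ n, m = n + 1 := ⟨m - 1, by omega⟩
  have hX := isToepMinorant_toepBorder hQ hband hS'
  have hY := hS.isToepMinorant.shift
  have hshift : (fun i j => S (i + 1) (j + 1)) = S' := by
    refine eq_of_schurQF_eq hY.support hS'.isToepMinorant.support hY.adjoint_eq
      hS'.isToepMinorant.adjoint_eq fun w => le_antisymm (hS'.schurQF_le hY w) ?_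
    have h := hS.schurQF_le hX (seqCons 0 w)
    rwa [← schurQF_shift, ← schurQF_shift] at h
  have hlow : ∀ i j, S (i + 1) (j + 1) = S' i j := fun i j => congrFun₂ hshift i j
  exact ⟨fun i hi => hS.apply_zero_eq hX rfl hlow hi, hlow⟩

end
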